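/- Let A be a 2×2 integer matrix with determinant 1. Then for every k ≥ 1 there exists a natural number d with 1 ≤ d ≤ 6^k such that I + A + A² + ⋯ + A^{d-1} ≡ 0 modulo 3^k (entrywise). -/
import Mathlib

set_option maxRecDepth 10000 in
private lemma base_zmod : ∀ B : Matrix (Fin 2) (Fin 2) (ZMod 3), B.det = 1 →
    ∃ d : Fin 7, 1 ≤ d.val ∧ (∑ n ∈ Finset.range d.val, B ^ n) = 0 := by decide

private lemma base_int (A : Matrix (Fin 2) (Fin 2) ℤ) (hA : A.det = 1) :
    ∃ d : ℕ, 1 ≤ d ∧ d ≤ 6 ∧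
      ∀ i j : Fin 2, (3 : ℤ) ∣ (∑ n ∈ Finset.range d, A ^ n) i j := by
  have hdet : ((Int.castRingHom (ZMod 3)).mapMatrix A).det = 1 := by
    rw [← RingHom.map_det, hA, map_one]
  obtain ⟨d, hd1, hd0⟩ := base_zmod _ hdet
  refine ⟨d.val, hd1, by omega, fun i j => ?_⟩
  have h0 : (Int.castRingHom (ZMod 3)).mapMatrix (∑ n ∈ Finset.range d.val, A ^ n) = 0 := by
    rw [map_sum]
    simp only [map_pow]
    exact hd0
  have h := congrFun (congrFun h0 i) j
  simp only [RingHom.mapMatrix_apply, Matrix.map_apply, Matrix.zero_apply] at h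
  exact (ZMod.intCast_zmod_eq_zero_iff_dvd _ 3).mp h

private lemma geom_sum_mul_geom {M : Type*} [Ring M] (x : M) (a b : ℕ) :
    (∑ n ∈ Finset.range (a * b), x ^ n)
      = (∑ n ∈ Finset.range a, x ^ n) * (∑ m ∈ Finset.range b, (x ^ a) ^ m) := by
  induction b with
  | zero => simp
  | succ b ih =>
      rw [Nat.mul_succ, Finset.sum_range_add, ih, Finset.sum_range_succ, mul_add]
      congr 1
      rw [← pow_mul, Finset.sum_mul]
      exact Finset.sum_congr rfl fun i _ => by rw [← pow_add, Nat.add_comm]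

/-- Lemma 3.13: for every `A ∈ SL(2,ℤ)` and every `k ≥ 1` there is `1 ≤ d ≤ 6^k`
with `I + A + ⋯ + A^{d-1} ≡ 0 (mod 3^k)` entrywise. -/
theorem sl2_geom_sum_mod_three_pow (A : Matrix (Fin 2) (Fin 2) ℤ) (hA : A.det = 1)
    (k : ℕ) (hk : 1 ≤ k) :
    ∃ d : ℕ, 1 ≤ d ∧ d ≤ 6 ^ k ∧
      ∀ i j : Fin 2, ((3 : ℤ) ^ k) ∣ (∑ n ∈ Finset.range d, A ^ n) i j := by
  induction k, hk using Nat.le_induction with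
  | base => simpa using base_int A hA
  | succ k hk ih =>
      obtain ⟨d₁, hd₁1, hd₁6, hdvd₁⟩ := ih
      have hdetB : (A ^ d₁).det = 1 := by
        rw [Matrix.det_pow, hA, one_pow]
      obtain ⟨d₂, hd₂1, hd₂6, hdvd₂⟩ := base_int (A ^ d₁) hdetB
      refine ⟨d₁ * d₂, Nat.one_le_iff_ne_zero.mpr (by positivity), ?_, fun i j => ?_⟩
      · calc d₁ * d₂ ≤ 6 ^ k * 6 := Nat.mul_le_mul hd₁6 hd₂6
          _ = 6 ^ (k + 1) := by ring
      · rw [geom_sum_mul_geom, Matrix.mul_apply]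
        refine Finset.dvd_sum fun l _ => ?_
        rw [pow_succ]
        exact mul_dvd_mul (hdvd₁ i l) (hdvd₂ l j)
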